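/- arXiv:1903.07942 — 4 statements merged into one kernel-verified Lean document; each statement's English description precedes it below -/
import Mathlib

section
/- Let 1 ≤ b ≤ k be integers and let X_1,…,X_k be independent real random variables, each exponentially distributed with mean 1. Let M_b = max over all subsets S ⊆ {1,…,k} with |S| = b of Σ_{i∈S} X_i (i.e., M_b is the sum of the b largest of the X_i). Then E[M_b] = b·(1 + Σ_{j=b+1}^{k} 1/j), where the sum Σ_{j=b+1}^{k} 1/j is taken to be 0 when b = k. In particular, the lower-trimmed Hill statistic T_{b,k} is unbiased for ξ under the exact Pareto model. -/
open MeasureTheory ProbabilityTheory Finset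
open Real
open Set (Ioi Iic)

/-!
Write `M_j` for the sum of the `j` largest values. The increment `M_{j+1} - M_j` is the
`(j+1)`-st largest value, so it exceeds `t` exactly when at least `j + 1` of the `X_i` do. By
independence this has probability `∑_{m > j} C(k, m) e^{-mt} (1 - e^{-t})^{k-m}`, and the
layer-cake formula together with the beta integral
`C(k, m) ∫₀^∞ e^{-mt} (1 - e^{-t})^{k-m} dt = 1/m` gives `E[M_{j+1} - M_j] = ∑_{m=j+1}^{k} 1/m`.
Summing over `j < b` yields `b (1 + ∑_{m=b+1}^{k} 1/m)`.
-/

section SumLargest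

variable {ι : Type*} [Fintype ι]

noncomputable def sumLargest (j : ℕ) (hj : j ≤ Fintype.card ι) (x : ι → ℝ) : ℝ :=
  (univ.powersetCard j).sup' (powersetCard_nonempty.mpr hj) fun S => ∑ i ∈ S, x i

variable {j : ℕ} (x : ι → ℝ)

@[simp]
lemma sumLargest_zero (h : 0 ≤ Fintype.card ι) : sumLargest 0 h x = 0 := by
  simp [sumLargest]

lemma sum_le_sumLargest (hj : j ≤ Fintype.card ι) {S : Finset ι} (hS : #S = j) :
    ∑ i ∈ S, x i ≤ sumLargest j hj x :=
  le_sup' (fun S => ∑ i ∈ S, x i) (mem_powersetCard_univ.mpr hS)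

lemma exists_sum_eq_sumLargest (hj : j ≤ Fintype.card ι) :
    ∃ S : Finset ι, #S = j ∧ sumLargest j hj x = ∑ i ∈ S, x i := by
  obtain ⟨S, hS, hmax⟩ :=
    exists_mem_eq_sup' (powersetCard_nonempty.mpr hj) fun S => ∑ i ∈ S, x i
  exact ⟨S, mem_powersetCard_univ.mp hS, hmax⟩

lemma abs_sumLargest_le (hj : j ≤ Fintype.card ι) : |sumLargest j hj x| ≤ ∑ i, |x i| := by
  obtain ⟨S, -, hS⟩ := exists_sum_eq_sumLargest x hj
  rw [hS]
  exact (abs_sum_le_sum_abs _ _).trans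
    (sum_le_sum_of_subset_of_nonneg (subset_univ S) fun i _ _ => abs_nonneg (x i))

lemma lt_sumLargest_succ_sub_iff (hj : j + 1 ≤ Fintype.card ι) (t : ℝ) :
    t < sumLargest (j + 1) hj x - sumLargest j (Nat.le_of_succ_le hj) x ↔
      j + 1 ≤ #{i | t < x i} := by
  classical
  constructor
  · intro hgap
    by_contra! hfew
    obtain ⟨S, hS, hSmax⟩ := exists_sum_eq_sumLargest x hj
    obtain ⟨i, hiS, hi⟩ := exists_mem_notMem_of_card_lt_card (hS ▸ hfew)
    have hxi : x i ≤ t := by simpa using hi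
    have hrest := sum_le_sumLargest x (Nat.le_of_succ_le hj)
      (S := S.erase i) (by rw [card_erase_of_mem hiS, hS]; rfl)
    rw [← sum_erase_add S x hiS] at hSmax
    linarith
  · intro hmany
    obtain ⟨T, hT, hTmax⟩ := exists_sum_eq_sumLargest x (Nat.le_of_succ_le hj)
    obtain ⟨i, hi, hiT⟩ := exists_mem_notMem_of_card_lt_card (hT ▸ hmany : #T < _)
    have hxi : t < x i := by simpa using hi
    have hins := sum_le_sumLargest x hj (S := insert i T) (by rw [card_insert_of_notMem hiT, hT])
    rw [sum_insert hiT] at hins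
    linarith

lemma sumLargest_le_succ {x : ι → ℝ} (hx : 0 ≤ x) (hj : j + 1 ≤ Fintype.card ι) :
    sumLargest j (Nat.le_of_succ_le hj) x ≤ sumLargest (j + 1) hj x := by
  rw [← sub_nonneg]
  refine le_of_forall_lt fun t ht => (lt_sumLargest_succ_sub_iff x hj t).mpr ?_
  rwa [filter_true_of_mem fun i _ => ht.trans_le (hx i), card_univ]

end SumLargest

section BetaIntegral

open Nat

lemma integrableOn_exp_neg_pow_mul_one_sub_pow {m : ℕ} (hm : m ≠ 0) (n : ℕ) :
    IntegrableOn (fun t => exp (-t) ^ m * (1 - exp (-t)) ^ n) (Ioi 0) := by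
  refine (exp_neg_integrableOn_Ioi 0 one_pos).mono' (by fun_prop) ?_
  filter_upwards [ae_restrict_mem measurableSet_Ioi] with t (ht : 0 < t)
  have hexp : exp (-t) ≤ 1 := exp_le_one_iff.mpr (by linarith)
  have hexp' : 0 ≤ 1 - exp (-t) := sub_nonneg.mpr hexp
  rw [norm_of_nonneg (by positivity), neg_one_mul]
  calc exp (-t) ^ m * (1 - exp (-t)) ^ n ≤ exp (-t) ^ m :=
        mul_le_of_le_one_right (by positivity) (pow_le_one₀ hexp' (by linarith [exp_pos (-t)]))
    _ ≤ exp (-t) := pow_le_of_le_one (exp_pos _).le hexp hm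

lemma integral_exp_neg_pow_succ (m : ℕ) :
    ∫ t in Ioi 0, exp (-t) ^ (m + 1) = 1 / (m + 1) := by
  have hm : -((m + 1 : ℕ) : ℝ) < 0 := neg_neg_of_pos (by positivity)
  simp_rw [← exp_nat_mul, mul_neg, ← neg_mul]
  rw [integral_exp_mul_Ioi hm, mul_zero, exp_zero, neg_div_neg_eq, cast_succ]

/-- The beta integral `B(m+1, n+1)`, after the substitution `u = exp (-t)`. -/
lemma integral_exp_neg_pow_succ_mul_one_sub_pow (m n : ℕ) :
    ∫ t in Ioi 0, exp (-t) ^ (m + 1) * (1 - exp (-t)) ^ n = (m ! * n ! / (m + n + 1)! : ℝ) := by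
  induction n generalizing m with
  | zero =>
    simp only [pow_zero, mul_one, integral_exp_neg_pow_succ, factorial_zero, add_zero,
      factorial_succ]
    push_cast
    field_simp
  | succ n ih =>
    have hsplit : ∀ t : ℝ, exp (-t) ^ (m + 1) * (1 - exp (-t)) ^ (n + 1) =
        exp (-t) ^ (m + 1) * (1 - exp (-t)) ^ n - exp (-t) ^ (m + 1 + 1) * (1 - exp (-t)) ^ n := by
      intro t; ring
    simp_rw [hsplit]
    rw [integral_sub (integrableOn_exp_neg_pow_mul_one_sub_pow m.succ_ne_zero n)
      (integrableOn_exp_neg_pow_mul_one_sub_pow (m + 1).succ_ne_zero n), ih, ih,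
      show m + 1 + n + 1 = m + n + 1 + 1 by ring, show m + (n + 1) + 1 = m + n + 1 + 1 by ring]
    simp only [factorial_succ]
    push_cast
    field_simp
    ring

lemma choose_mul_integral_exp_neg_pow_mul_one_sub_pow {m k : ℕ} (hm : 0 < m) (hmk : m ≤ k) :
    k.choose m * ∫ t in Ioi 0, exp (-t) ^ m * (1 - exp (-t)) ^ (k - m) = 1 / m := by
  obtain ⟨m, rfl⟩ := Nat.exists_eq_add_of_le' hm
  have hfact := congrArg (Nat.cast : ℕ → ℝ) (choose_mul_factorial_mul_factorial hmk)
  rw [integral_exp_neg_pow_succ_mul_one_sub_pow, show m + (k - (m + 1)) + 1 = k by omega]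
  simp only [cast_mul, factorial_succ] at hfact ⊢
  field_simp
  linear_combination hfact

end BetaIntegral

section Exceedances

variable {Ω ι : Type*} [Fintype ι] {X : ι → Ω → ℝ}

lemma setOf_filter_lt_eq_iInter [DecidableEq ι] (X : ι → Ω → ℝ) (t : ℝ) (A : Finset ι) :
    {ω | ({i | t < X i ω} : Finset ι) = A} =
      ⋂ i, X i ⁻¹' (if i ∈ A then Ioi t else Iic t) := by
  ext ω
  simp only [Set.mem_ofPred_eq, Set.mem_iInter, Set.mem_preimage, Finset.ext_iff,
    Finset.mem_filter, Finset.mem_univ, true_and]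
  refine forall_congr' fun i => ?_
  by_cases hi : i ∈ A <;> simp [hi]

variable [MeasurableSpace Ω] {μ : Measure Ω} {ν : Measure ℝ}

lemma measurableSet_filter_lt_eq (hmeas : ∀ i, Measurable (X i)) (t : ℝ) (A : Finset ι) :
    MeasurableSet {ω | ({i | t < X i ω} : Finset ι) = A} := by
  classical
  rw [setOf_filter_lt_eq_iInter]
  exact .iInter fun i => hmeas i (by split_ifs <;> measurability)

lemma measureReal_filter_lt_eq (hmeas : ∀ i, Measurable (X i)) (hindep : iIndepFun X μ)
    (hdist : ∀ i, μ.map (X i) = ν) (t : ℝ) (A : Finset ι) :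
    μ.real {ω | ({i | t < X i ω} : Finset ι) = A} =
      ν.real (Ioi t) ^ #A * ν.real (Iic t) ^ (Fintype.card ι - #A) := by
  classical
  have hset : ∀ i, MeasurableSet (if i ∈ A then Ioi t else Iic t) := by
    intro i; split_ifs <;> measurability
  have hfactor : ∀ i, μ.real (X i ⁻¹' (if i ∈ A then Ioi t else Iic t)) =
      if i ∈ A then ν.real (Ioi t) else ν.real (Iic t) := by
    intro i
    rw [← map_measureReal_apply (hmeas i) (hset i), hdist i]
    split_ifs <;> rfl
  rw [setOf_filter_lt_eq_iInter, measureReal_def, hindep.meas_iInter fun i => ⟨_, hset i, rfl⟩,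
    ENNReal.toReal_prod]
  simp_rw [← measureReal_def, hfactor]
  rw [prod_ite, prod_const, prod_const, filter_mem_eq_inter, Finset.univ_inter,
    filter_notMem_eq_sdiff, card_univ_sdiff]


lemma measureReal_le_card_filter_lt [IsFiniteMeasure μ] (hmeas : ∀ i, Measurable (X i))
    (hindep : iIndepFun X μ) (hdist : ∀ i, μ.map (X i) = ν) (t : ℝ) (j : ℕ) :
    μ.real {ω | j ≤ #({i | t < X i ω} : Finset ι)} =
      ∑ m ∈ Icc j (Fintype.card ι), (Fintype.card ι).choose m *
        ν.real (Ioi t) ^ m * ν.real (Iic t) ^ (Fintype.card ι - m) := by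
  classical
  have hpreimage : {ω | j ≤ #({i | t < X i ω} : Finset ι)} =
      (fun ω => ({i | t < X i ω} : Finset ι)) ⁻¹' ↑({A | j ≤ #A} : Finset (Finset ι)) := by
    ext ω; simp
  rw [hpreimage, ← sum_measureReal_preimage_singleton _
    fun A _ => measurableSet_filter_lt_eq hmeas t A]
  simp_rw [Set.preimage, Set.mem_singleton_iff, measureReal_filter_lt_eq hmeas hindep hdist]
  rw [sum_filter, ← Finset.powerset_univ, sum_powerset_apply_card fun m =>
      if j ≤ m then ν.real (Ioi t) ^ m * ν.real (Iic t) ^ (Fintype.card ι - m) else 0,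
    card_univ]
  simp_rw [smul_ite, smul_zero, ← sum_filter, nsmul_eq_mul, mul_assoc]
  congr 1
  ext m
  simp only [Finset.mem_filter, Finset.mem_range, Finset.mem_Icc]
  omega

end Exceedances

lemma measureReal_expMeasure_one_Iic {t : ℝ} (ht : 0 ≤ t) :
    (expMeasure 1).real (Iic t) = 1 - exp (-t) := by
  have := isProbabilityMeasure_expMeasure one_pos
  rw [← cdf_eq_real, cdf_expMeasure_eq one_pos, if_pos ht, one_mul]

lemma measureReal_expMeasure_one_Ioi {t : ℝ} (ht : 0 ≤ t) :
    (expMeasure 1).real (Ioi t) = exp (-t) := by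
  have := isProbabilityMeasure_expMeasure one_pos
  rw [← Set.compl_Iic, measureReal_compl measurableSet_Iic, probReal_univ,
    measureReal_expMeasure_one_Iic ht, sub_sub_cancel]

lemma ae_nonneg_expMeasure_one : ∀ᵐ x ∂expMeasure 1, 0 ≤ x := by
  have := isProbabilityMeasure_expMeasure one_pos
  refine measure_mono_null (fun x (hx : ¬0 ≤ x) => Set.mem_Iic.mpr (not_le.mp hx).le) ?_
  rw [← ofReal_cdf, cdf_expMeasure_eq one_pos, if_pos le_rfl]
  simp

lemma integrable_id_expMeasure_one : Integrable id (expMeasure 1) := by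
  refine (integrable_withDensity_iff_integrable_smul' (measurable_gammaPDFReal 1 1).ennreal_ofReal
    (ae_of_all _ fun _ => ENNReal.ofReal_lt_top)).mpr ?_
  refine ((integrableOn_rpow_mul_exp_neg_rpow (s := 1) (p := 1) (by norm_num) one_pos
    ).integrable_indicator measurableSet_Ioi).congr (ae_of_all _ fun x => ?_)
  change _ = (exponentialPDF 1 x).toReal • x
  rw [exponentialPDF_eq]
  rcases lt_trichotomy x 0 with hx | rfl | hx
  · simp [Set.indicator_of_notMem (Set.notMem_Ioi.mpr hx.le), not_le.mpr hx]
  · simp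
  · simp [Set.indicator_of_mem (Set.mem_Ioi.mpr hx), hx.le, (exp_pos _).le, mul_comm]

section SumLargestOfRandomVector

variable {Ω ι : Type*} [MeasurableSpace Ω] {μ : Measure Ω} [Fintype ι] {X : ι → Ω → ℝ}
  {j : ℕ}

lemma measurable_sumLargest (hmeas : ∀ i, Measurable (X i)) (hj : j ≤ Fintype.card ι) :
    Measurable fun ω => sumLargest j hj (X · ω) := by
  convert Finset.measurable_sup' (powersetCard_nonempty.mpr hj)
    fun S _ => Finset.measurable_sum S fun i _ => hmeas i
  rw [Finset.sup'_apply]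
  rfl

lemma integrable_sumLargest (hmeas : ∀ i, Measurable (X i)) (hint : ∀ i, Integrable (X i) μ)
    (hj : j ≤ Fintype.card ι) : Integrable (fun ω => sumLargest j hj (X · ω)) μ :=
  (integrable_finsetSum univ fun i _ => (hint i).abs).mono'
    (measurable_sumLargest hmeas hj).aestronglyMeasurable
    (ae_of_all _ fun ω => by simpa using abs_sumLargest_le (X · ω) hj)

lemma integrable_of_map_eq_expMeasure {Y : Ω → ℝ} (hmeas : Measurable Y)
    (hdist : μ.map Y = expMeasure 1) : Integrable Y μ :=
  (integrable_map_measure aestronglyMeasurable_id hmeas.aemeasurable).mp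
    (hdist ▸ integrable_id_expMeasure_one)

variable [IsProbabilityMeasure μ]

lemma integral_sumLargest_succ_sub (hmeas : ∀ i, Measurable (X i)) (hindep : iIndepFun X μ)
    (hdist : ∀ i, μ.map (X i) = expMeasure 1) (hj : j + 1 ≤ Fintype.card ι) :
    ∫ ω, (sumLargest (j + 1) hj (X · ω) - sumLargest j (Nat.le_of_succ_le hj) (X · ω)) ∂μ =
      ∑ m ∈ Icc (j + 1) (Fintype.card ι), (1 : ℝ) / m := by
  have hX := fun i => integrable_of_map_eq_expMeasure (hmeas i) (hdist i)
  have hnonneg : ∀ᵐ ω ∂μ, 0 ≤ fun i => X i ω := ae_all_iff.mpr fun i =>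
    ae_of_ae_map (hmeas i).aemeasurable ((hdist i).symm ▸ ae_nonneg_expMeasure_one)
  have hgap : Integrable (fun ω => sumLargest (j + 1) hj (X · ω) -
      sumLargest j (Nat.le_of_succ_le hj) (X · ω)) μ :=
    (integrable_sumLargest hmeas hX hj).sub (integrable_sumLargest hmeas hX _)
  rw [hgap.integral_eq_integral_meas_lt
    (hnonneg.mono fun ω hω => sub_nonneg.mpr (sumLargest_le_succ hω hj))]
  calc ∫ t in Ioi 0, μ.real {ω | t < sumLargest (j + 1) hj (X · ω) -
          sumLargest j (Nat.le_of_succ_le hj) (X · ω)}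
      = ∫ t in Ioi 0, ∑ m ∈ Icc (j + 1) (Fintype.card ι), (Fintype.card ι).choose m *
          (exp (-t) ^ m * (1 - exp (-t)) ^ (Fintype.card ι - m)) := by
        refine setIntegral_congr_fun measurableSet_Ioi fun t (ht : 0 < t) => ?_
        simp_rw [lt_sumLargest_succ_sub_iff _ hj]
        rw [measureReal_le_card_filter_lt hmeas hindep hdist,
          measureReal_expMeasure_one_Ioi ht.le, measureReal_expMeasure_one_Iic ht.le]
        simp_rw [mul_assoc]
    _ = ∑ m ∈ Icc (j + 1) (Fintype.card ι), (1 : ℝ) / m := by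
        rw [integral_finsetSum _ fun m hm => (integrableOn_exp_neg_pow_mul_one_sub_pow
          (by simp at hm; omega) _).const_mul _]
        refine sum_congr rfl fun m hm => ?_
        rw [mem_Icc] at hm
        rw [integral_const_mul, choose_mul_integral_exp_neg_pow_mul_one_sub_pow (by omega) hm.2]

lemma integral_sumLargest (hmeas : ∀ i, Measurable (X i)) (hindep : iIndepFun X μ)
    (hdist : ∀ i, μ.map (X i) = expMeasure 1) (hj : j ≤ Fintype.card ι) :
    ∫ ω, sumLargest j hj (X · ω) ∂μ =
      ∑ l ∈ range j, ∑ m ∈ Icc (l + 1) (Fintype.card ι), (1 : ℝ) / m := by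
  have hX := fun i => integrable_of_map_eq_expMeasure (hmeas i) (hdist i)
  induction j with
  | zero => simp
  | succ j ih =>
    rw [sum_range_succ, ← ih (Nat.le_of_succ_le hj),
      ← integral_sumLargest_succ_sub hmeas hindep hdist hj,
      integral_sub (integrable_sumLargest hmeas hX hj) (integrable_sumLargest hmeas hX _),
      add_sub_cancel]

end SumLargestOfRandomVector

lemma sum_range_sum_Icc_one_div {b n : ℕ} (hbn : b ≤ n) :
    ∑ l ∈ range b, ∑ m ∈ Icc (l + 1) n, (1 : ℝ) / m =
      b * (1 + ∑ m ∈ Icc (b + 1) n, (1 : ℝ) / m) := by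
  induction b with
  | zero => simp
  | succ b ih =>
    rw [sum_range_succ, ih (by omega), ← insert_Icc_add_one_left_eq_Icc (by omega : b + 1 ≤ n),
      sum_insert (by simp)]
    push_cast
    field_simp
    ring

/-- For independent exponential random variables `X_1,…,X_k` with mean 1, the expectation of
the sum `M_b` of the `b` largest of them (the maximum over all `b`-element subsets `S` of
`∑_{i∈S} X_i`) equals `b·(1 + ∑_{j=b+1}^{k} 1/j)`. In particular the lower-trimmed Hill
statistic `T_{b,k}` is unbiased under the exact Pareto model. -/
theorem expectation_sum_b_largest_exponentials {Ω : Type*} [MeasurableSpace Ω]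
    (μ : Measure Ω) [IsProbabilityMeasure μ] (b k : ℕ) (hbk : b ≤ k)
    (X : Fin k → Ω → ℝ) (hmeas : ∀ i, Measurable (X i))
    (hindep : iIndepFun X μ)
    (hdist : ∀ i, Measure.map (X i) μ = expMeasure 1) :
    ∫ ω, ((Finset.univ : Finset (Fin k)).powersetCard b).sup'
        (Finset.powersetCard_nonempty.mpr (by simpa using hbk))
        (fun S => ∑ i ∈ S, X i ω) ∂μ
      = (b : ℝ) * (1 + ∑ j ∈ Finset.Icc (b + 1) k, (1 : ℝ) / (j : ℝ)) := by
  calc _ = ∑ l ∈ range b, ∑ m ∈ Icc (l + 1) (Fintype.card (Fin k)), (1 : ℝ) / m :=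
        integral_sumLargest hmeas hindep hdist (by simpa using hbk)
    _ = _ := by rw [Fintype.card_fin, sum_range_sum_Icc_one_div hbk]
end

section
/- Define Ei(x) = ∫_{x}^{∞} e^{−v}/v dv for x > 0. For every real number p < 1/2, the function u ↦ u^{−2p}/(1 − log u)² is integrable on (0, 1), and ∫_{0}^{1} u^{−2p}/(1 − log u)² du = 1 − e^{1−2p}·(1 − 2p)·Ei(1 − 2p). -/
/-! The substitution `u = e^{1-t}` turns the integral into `e^{a} ∫_1^∞ e^{-a t} / t² dt` with
`a = 1 - 2p > 0`, and `t ↦ a Ei(a t) - e^{-a t} / t` is an antiderivative of `e^{-a t} / t²`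
that vanishes at infinity. -/

open MeasureTheory Set Real Filter Topology

/-- The exponential integral `Ei(x) = ∫_{x}^{∞} e^{−v}/v dv` (for `x > 0`). -/
noncomputable def Ei (x : ℝ) : ℝ := ∫ v in Set.Ioi x, Real.exp (-v) / v

lemma integrableOn_exp_neg_div_Ioi {x : ℝ} (hx : 0 < x) :
    IntegrableOn (fun v => exp (-v) / v) (Ioi x) := by
  have hdom : IntegrableOn (fun v => exp (-1 * v) * x⁻¹) (Ioi x) :=
    (exp_neg_integrableOn_Ioi x one_pos).mul_const x⁻¹
  simp only [neg_mul, one_mul] at hdom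
  refine hdom.mono' (by fun_prop : Measurable fun v => exp (-v) / v).aestronglyMeasurable ?_
  filter_upwards [ae_restrict_mem measurableSet_Ioi] with v (hv : x < v)
  rw [norm_of_nonneg (by positivity [hx.trans hv]), div_eq_mul_inv]
  gcongr

lemma Ei_one_sub_Ei {x : ℝ} (hx : 0 < x) : Ei 1 - Ei x = ∫ v in (1 : ℝ)..x, exp (-v) / v :=
  intervalIntegral.integral_Ioi_sub_Ioi' (integrableOn_exp_neg_div_Ioi one_pos)
    (integrableOn_exp_neg_div_Ioi hx)

lemma hasDerivAt_Ei {x : ℝ} (hx : 0 < x) : HasDerivAt Ei (-(exp (-x) / x)) x := by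
  have hcont : ContinuousOn (fun v => exp (-v) / v) (Ioi 0) :=
    fun v (hv : 0 < v) => (by fun_prop (disch := positivity) :
      ContinuousAt (fun v => exp (-v) / v) v).continuousWithinAt
  have hint : IntervalIntegrable (fun v => exp (-v) / v) volume 1 x :=
    (hcont.mono fun v hv => (lt_min one_pos hx).trans_le hv.1).intervalIntegrable
  have hFTC := (intervalIntegral.integral_hasDerivAt_right hint
    (hcont.stronglyMeasurableAtFilter isOpen_Ioi x hx)
    (hcont.continuousAt (isOpen_Ioi.mem_nhds hx))).const_sub (Ei 1)
  refine hFTC.congr_of_eventuallyEq ?_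
  filter_upwards [isOpen_Ioi.mem_nhds hx] with y (hy : 0 < y)
  rw [← Ei_one_sub_Ei hy, sub_sub_cancel]

lemma tendsto_Ei_atTop : Tendsto Ei atTop (𝓝 0) :=
  tendsto_integral_Ioi_zero tendsto_id

lemma hasDerivAt_mul_Ei_mul_sub_exp_neg_mul_div {a t : ℝ} (ha : 0 < a) (ht : 0 < t) :
    HasDerivAt (fun t => a * Ei (a * t) - exp (-(a * t)) / t) (exp (-(a * t)) / t ^ 2) t := by
  have hlin : HasDerivAt (fun t => a * t) a t := by simpa using (hasDerivAt_id t).const_mul a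
  have hEi : HasDerivAt (fun t => a * Ei (a * t)) (a * (-(exp (-(a * t)) / (a * t)) * a)) t :=
    ((hasDerivAt_Ei (mul_pos ha ht)).comp t hlin).const_mul a
  have hexp : HasDerivAt (fun t => exp (-(a * t)) / t)
      ((exp (-(a * t)) * -a * t - exp (-(a * t)) * 1) / t ^ 2) t :=
    hlin.neg.exp.div (hasDerivAt_id t) ht.ne'
  refine (hEi.sub hexp).congr_deriv ?_
  field_simp
  ring

lemma tendsto_mul_Ei_mul_sub_exp_neg_mul_div {a : ℝ} (ha : 0 < a) :
    Tendsto (fun t => a * Ei (a * t) - exp (-(a * t)) / t) atTop (𝓝 0) := by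
  have hmul : Tendsto (fun t => a * t) atTop atTop := tendsto_id.const_mul_atTop ha
  have hexp : Tendsto (fun t => exp (-(a * t)) / t) atTop (𝓝 0) := by
    simpa [div_eq_mul_inv] using
      ((tendsto_exp_atBot.comp (tendsto_neg_atTop_atBot.comp hmul)).mul tendsto_inv_atTop_zero)
  simpa using ((tendsto_Ei_atTop.comp hmul).const_mul a).sub hexp

section ExpNegMulDivSq

variable {a x : ℝ}

lemma integrableOn_exp_neg_mul_div_sq_Ioi (ha : 0 < a) (hx : 0 < x) :
    IntegrableOn (fun t => exp (-(a * t)) / t ^ 2) (Ioi x) :=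
  integrableOn_Ioi_deriv_of_nonneg'
    (fun t ht => hasDerivAt_mul_Ei_mul_sub_exp_neg_mul_div ha (hx.trans_le ht))
    (fun t _ => by positivity) (tendsto_mul_Ei_mul_sub_exp_neg_mul_div ha)

lemma integral_exp_neg_mul_div_sq_Ioi (ha : 0 < a) (hx : 0 < x) :
    ∫ t in Ioi x, exp (-(a * t)) / t ^ 2 = exp (-(a * x)) / x - a * Ei (a * x) := by
  rw [integral_Ioi_of_hasDerivAt_of_nonneg'
    (fun t ht => hasDerivAt_mul_Ei_mul_sub_exp_neg_mul_div ha (hx.trans_le ht))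
    (fun t _ => by positivity) (tendsto_mul_Ei_mul_sub_exp_neg_mul_div ha)]
  ring

end ExpNegMulDivSq

section ExpOneSubSubstitution

variable {E : Type*} [NormedAddCommGroup E] [NormedSpace ℝ E]

lemma image_exp_one_sub_Ioi_one : (fun t => exp (1 - t)) '' Ioi 1 = Ioo 0 1 := by
  ext u
  constructor
  · rintro ⟨t, ht, rfl⟩
    exact ⟨exp_pos _, exp_lt_one_iff.2 (by linarith [mem_Ioi.1 ht])⟩
  · rintro ⟨hu0, hu1⟩
    exact ⟨1 - log u, mem_Ioi.2 (by linarith [log_neg hu0 hu1]), by simp [exp_log hu0]⟩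

lemma hasDerivAt_exp_one_sub (t : ℝ) : HasDerivAt (fun t => exp (1 - t)) (-exp (1 - t)) t := by
  simpa using ((hasDerivAt_id t).const_sub 1).exp

lemma injective_exp_one_sub : Function.Injective fun t : ℝ => exp (1 - t) :=
  fun _ _ h => by simpa using exp_injective h

lemma integrableOn_Ioo_zero_one_iff_exp_one_sub (f : ℝ → E) :
    IntegrableOn f (Ioo 0 1) ↔
      IntegrableOn (fun t => exp (1 - t) • f (exp (1 - t))) (Ioi 1) := by
  rw [← image_exp_one_sub_Ioi_one,
    integrableOn_image_iff_integrableOn_abs_deriv_smul measurableSet_Ioi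
    (fun t _ => (hasDerivAt_exp_one_sub t).hasDerivWithinAt) injective_exp_one_sub.injOn f]
  simp_rw [abs_neg, abs_of_pos (exp_pos _)]

lemma integral_Ioo_zero_one_eq_exp_one_sub (f : ℝ → E) :
    ∫ u in Ioo 0 1, f u = ∫ t in Ioi 1, exp (1 - t) • f (exp (1 - t)) := by
  rw [← image_exp_one_sub_Ioi_one, integral_image_eq_integral_abs_deriv_smul measurableSet_Ioi
    (fun t _ => (hasDerivAt_exp_one_sub t).hasDerivWithinAt) injective_exp_one_sub.injOn f]
  simp_rw [abs_neg, abs_of_pos (exp_pos _)]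

end ExpOneSubSubstitution

/-- For `p < 1/2`, the function `u ↦ u^{−2p}/(1 − log u)²` is integrable on `(0,1)` and
`∫_{0}^{1} u^{−2p}/(1 − log u)² du = 1 − e^{1−2p}·(1 − 2p)·Ei(1 − 2p)`. -/
theorem integral_rpow_div_one_sub_log_sq (p : ℝ) (hp : p < 1 / 2) :
    IntegrableOn (fun u : ℝ => u ^ (-(2 * p)) / (1 - Real.log u) ^ 2) (Set.Ioo 0 1) volume ∧
      ∫ u in Set.Ioo 0 1, u ^ (-(2 * p)) / (1 - Real.log u) ^ 2
        = 1 - Real.exp (1 - 2 * p) * (1 - 2 * p) * Ei (1 - 2 * p) := by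
  set a := 1 - 2 * p with ha_def
  have ha : 0 < a := by linarith
  have hsubst : EqOn
      (fun t => exp (1 - t) • (exp (1 - t) ^ (-(2 * p)) / (1 - log (exp (1 - t))) ^ 2))
      (fun t => exp a * (exp (-(a * t)) / t ^ 2)) (Ioi 1) := fun t _ => by
    simp only [smul_eq_mul, log_exp, sub_sub_cancel, rpow_def_of_pos (exp_pos _), ← mul_div_assoc,
      ← exp_add]
    rw [ha_def]
    ring_nf
  rw [integrableOn_Ioo_zero_one_iff_exp_one_sub, integral_Ioo_zero_one_eq_exp_one_sub,
    setIntegral_congr_fun measurableSet_Ioi hsubst, integral_const_mul,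
    integral_exp_neg_mul_div_sq_Ioi ha one_pos]
  refine ⟨IntegrableOn.congr_fun ((integrableOn_exp_neg_mul_div_sq_Ioi ha one_pos).const_mul _)
    hsubst.symm measurableSet_Ioi, ?_⟩
  rw [mul_one, div_one, mul_sub, ← exp_add, add_neg_cancel, exp_zero, mul_assoc]
end

section
/- Define Ei(x) = ∫_{x}^{∞} e^{−v}/v dv for x > 0, and for integers 1 ≤ b ≤ k let H(b,k) = Σ_{j=b+1}^{k} 1/j (with H(k,k) = 0). Then lim_{k→∞} Σ_{b=1}^{k} (1/b + Σ_{j=b+1}^{k} 1/j²) / (1 + H(b,k))² = 1 + e·Ei(1). -/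
open Finset Filter Real

/-- The tail harmonic sum `H(b,k) = ∑_{j=b+1}^{k} 1/j`, with `H(k,k) = 0`. -/
noncomputable def Htail (b k : ℕ) : ℝ := ∑ j ∈ Finset.Icc (b + 1) k, (1 : ℝ) / (j : ℝ)

/-!
Write `D_b = 1 + H(b,k)`, so that `D_{b-1} = D_b + 1/b` and
`1/b + ∑_{j>b} 1/j² = 2/b - 1/k + O(1/b²)`. Since `(1/b)/D_b² = 1/D_b - 1/D_{b-1} + O(1/b²)/D_b²`,
the sum telescopes to `2 (1 - 1/D_0) - (1/k) ∑_b 1/D_b²` up to an error `O(∑_b b⁻²/D_b²)`, which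
tends to `0` by Tannery's theorem, while `1/D_0 → 0`. As `H(b,k) ≈ log (k/b)`, the middle term is
a Riemann sum of `∫₀¹ dt/(1 - log t)²`; the substitution `t = e^{1-v}` and
`(-e^{-v}/v)' = e^{-v}/v + e^{-v}/v²` evaluate this integral as `1 - e·Ei(1)`.
-/

open MeasureTheory

lemma sum_Icc_sub_pred {M : Type*} [AddCommGroup M] (g : ℕ → M) (k : ℕ) :
    ∑ b ∈ Icc 1 k, (g b - g (b - 1)) = g k - g 0 := by
  induction k with
  | zero => simp
  | succ k ih =>
    rw [sum_Icc_succ_top (by omega), ih, Nat.add_sub_cancel]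
    abel

/-- With `x = 1/b`, `y = 1/k`, `D = 1 + H(b,k)` and `T = ∑_{j>b} 1/j²`: the summand is the
telescoping term `2 (1/D - 1/(D + x))` up to `2 x²/D²`. -/
lemma abs_sub_two_mul_inv_sub_inv_le {x y T D : ℝ} (hx : 0 ≤ x) (hD : 1 ≤ D)
    (hT₁ : x - y - x ^ 2 ≤ T) (hT₂ : T ≤ x - y) :
    |(x + T) / D ^ 2 - (2 * (D⁻¹ - (D + x)⁻¹) - y / D ^ 2)| ≤ 2 * (x ^ 2 / D ^ 2) := by
  have hD0 : 0 < D := by linarith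
  have key : (x + T) / D ^ 2 - (2 * (D⁻¹ - (D + x)⁻¹) - y / D ^ 2)
      = 2 * (x ^ 2 / D ^ 2) / (D + x) - (x - y - T) / D ^ 2 := by
    field_simp
    ring
  have h₁ : 2 * (x ^ 2 / D ^ 2) / (D + x) ≤ 2 * (x ^ 2 / D ^ 2) :=
    div_le_self (by positivity) (by linarith)
  have h₂ : (x - y - T) / D ^ 2 ≤ x ^ 2 / D ^ 2 := by gcongr; linarith
  have h₃ : 0 ≤ (x - y - T) / D ^ 2 := div_nonneg (by linarith) (by positivity)
  have h₄ : 0 ≤ 2 * (x ^ 2 / D ^ 2) / (D + x) := by positivity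
  rw [key, abs_sub_le_iff]
  constructor <;> linarith

lemma one_div_sq_le_one_div_sq {a b : ℝ} (ha : 0 < a) (hab : a ≤ b) : 1 / b ^ 2 ≤ 1 / a ^ 2 := by
  gcongr

lemma one_le_one_sub_log {t : ℝ} (ht : t ∈ Set.Ioc (0 : ℝ) 1) : 1 ≤ 1 - log t := by
  linarith [log_nonpos ht.1.le ht.2]

lemma monotoneOn_one_div_one_sub_log_sq :
    MonotoneOn (fun t => 1 / (1 - log t) ^ 2) (Set.Ioc 0 1) := fun s hs t ht hst =>
  one_div_sq_le_one_div_sq (by linarith [one_le_one_sub_log ht]) (by linarith [log_le_log hs.1 hst])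

lemma sub_le_sum_Icc_one_div_sq {b k : ℕ} (hbk : b ≤ k) :
    1 / ((b : ℝ) + 1) - 1 / ((k : ℝ) + 1) ≤ ∑ j ∈ Icc (b + 1) k, 1 / (j : ℝ) ^ 2 := by
  induction k, hbk using Nat.le_induction with
  | base => simp
  | succ k hbk ih =>
    rw [sum_Icc_succ_top (by omega)]
    have hk : (0 : ℝ) < k + 1 := by positivity
    have : 1 / ((k : ℝ) + 1) - 1 / (k + 1 + 1) ≤ 1 / ((k : ℝ) + 1) ^ 2 := by
      rw [div_sub_div _ _ hk.ne' (by positivity), div_le_div_iff₀ (by positivity) (by positivity)]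
      nlinarith
    push_cast
    linarith

lemma sum_Icc_one_div_sq_le {b k : ℕ} (hb : 1 ≤ b) (hbk : b ≤ k) :
    ∑ j ∈ Icc (b + 1) k, 1 / (j : ℝ) ^ 2 ≤ 1 / (b : ℝ) - 1 / (k : ℝ) := by
  induction k, hbk using Nat.le_induction with
  | base => simp
  | succ k hbk ih =>
    rw [sum_Icc_succ_top (by omega)]
    have hk : (0 : ℝ) < k := by exact_mod_cast hb.trans hbk
    have : 1 / ((k : ℝ) + 1) ^ 2 ≤ 1 / (k : ℝ) - 1 / (k + 1) := by
      rw [div_sub_div _ _ hk.ne' (by positivity), div_le_div_iff₀ (by positivity) (by positivity)]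
      nlinarith
    push_cast
    linarith

section RiemannSum

variable {f : ℝ → ℝ} {a b : ℝ}

lemma intervalIntegral_le_mul_of_monotoneOn (hab : a ≤ b) (hf : MonotoneOn f (Set.Ioc a b))
    (hfi : IntervalIntegrable f volume a b) : ∫ t in a..b, f t ≤ (b - a) * f b := by
  rw [← smul_eq_mul, ← intervalIntegral.integral_const]
  exact intervalIntegral.integral_mono_on_of_le_Ioo hab hfi intervalIntegrable_const
    fun t ht => hf ⟨ht.1, ht.2.le⟩ ⟨ht.1.trans ht.2, le_rfl⟩ ht.2.le

lemma mul_le_intervalIntegral_of_monotoneOn (hab : a ≤ b) (hf : MonotoneOn f (Set.Ico a b))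
    (hfi : IntervalIntegrable f volume a b) : (b - a) * f a ≤ ∫ t in a..b, f t := by
  rw [← smul_eq_mul, ← intervalIntegral.integral_const]
  exact intervalIntegral.integral_mono_on_of_le_Ioo hab intervalIntegrable_const hfi
    fun t ht => hf ⟨le_rfl, ht.1.trans ht.2⟩ ⟨ht.1.le, ht.2⟩ ht.1.le

lemma integrableOn_Ioc_of_monotoneOn_of_nonneg (hf : MonotoneOn f (Set.Ioc a b))
    (h0 : ∀ t ∈ Set.Ioc a b, 0 ≤ f t) : IntegrableOn f (Set.Ioc a b) := by
  refine Integrable.mono' (integrableOn_const (C := f b) (by simp))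
    (aemeasurable_restrict_of_monotoneOn measurableSet_Ioc hf).aestronglyMeasurable ?_
  filter_upwards [ae_restrict_mem measurableSet_Ioc] with t ht
  rw [Real.norm_of_nonneg (h0 t ht)]
  exact hf ht ⟨ht.1.trans_le ht.2, le_rfl⟩ ht.2

variable (hf : MonotoneOn f (Set.Ioc 0 1)) (h0 : ∀ t ∈ Set.Ioc (0 : ℝ) 1, 0 ≤ f t)
include hf h0

lemma intervalIntegrable_of_monotoneOn_Ioc_zero_one (ha : 0 ≤ a) (hab : a ≤ b) (hb : b ≤ 1) :
    IntervalIntegrable f volume a b :=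
  (intervalIntegrable_iff_integrableOn_Ioc_of_le hab).2 <|
    (integrableOn_Ioc_of_monotoneOn_of_nonneg hf h0).mono_set (Set.Ioc_subset_Ioc ha hb)

lemma intervalIntegral_le_riemannSum {n : ℕ} (hn : 1 ≤ n) :
    ∫ t in (0 : ℝ)..1, f t ≤ 1 / n * ∑ j ∈ Icc 1 n, f (j / n) := by
  have hn' : (0 : ℝ) < n := by exact_mod_cast hn
  have hx (i : ℕ) (hi : i ≤ n) : (i : ℝ) / n ≤ 1 := div_le_one_of_le₀ (by exact_mod_cast hi) hn'.le
  have hstep (i : ℕ) : ((i + 1 : ℕ) : ℝ) / n - i / n = 1 / n := by push_cast; ring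
  have hpiece (i : ℕ) (hi : i < n) :
      ∫ t in (i / n : ℝ)..((i + 1 : ℕ) / n), f t ≤ 1 / n * f ((i + 1 : ℕ) / n) := by
    have hle : (i : ℝ) / n ≤ ((i + 1 : ℕ) : ℝ) / n := by gcongr; simp
    rw [← hstep]
    exact intervalIntegral_le_mul_of_monotoneOn hle
      (hf.mono (Set.Ioc_subset_Ioc (by positivity) (hx _ hi)))
      (intervalIntegrable_of_monotoneOn_Ioc_zero_one hf h0 (by positivity) hle (hx _ hi))
  calc ∫ t in (0 : ℝ)..1, f t
      = ∑ i ∈ range n, ∫ t in (i / n : ℝ)..((i + 1 : ℕ) / n), f t := by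
        rw [intervalIntegral.sum_integral_adjacent_intervals (a := fun i : ℕ => (i : ℝ) / n)
          fun i hi => intervalIntegrable_of_monotoneOn_Ioc_zero_one hf h0 (by positivity)
            (by gcongr; simp) (hx _ hi)]
        simp [hn'.ne']
    _ ≤ ∑ i ∈ range n, 1 / n * f ((i + 1 : ℕ) / n) :=
        sum_le_sum fun i hi => hpiece i (mem_range.1 hi)
    _ = 1 / n * ∑ j ∈ Icc 1 n, f (j / n) := by
        rw [← mul_sum, range_eq_Ico, sum_Ico_add' (fun j : ℕ => f (j / n)), zero_add,
          Ico_add_one_right_eq_Icc]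

lemma riemannSum_le_intervalIntegral_add {n : ℕ} (hn : 1 ≤ n) :
    1 / n * ∑ j ∈ Icc 1 n, f (j / n) ≤ (∫ t in (0 : ℝ)..1, f t) + f 1 / n := by
  have hn' : (0 : ℝ) < n := by exact_mod_cast hn
  have hx (i : ℕ) (hi : i ≤ n) : (i : ℝ) / n ≤ 1 := div_le_one_of_le₀ (by exact_mod_cast hi) hn'.le
  have hstep (i : ℕ) : ((i + 1 : ℕ) : ℝ) / n - i / n = 1 / n := by push_cast; ring
  have hpiece (i : ℕ) (hi : i ∈ Ico 1 n) :
      1 / n * f (i / n) ≤ ∫ t in (i / n : ℝ)..((i + 1 : ℕ) / n), f t := by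
    rw [mem_Ico] at hi
    have hle : (i : ℝ) / n ≤ ((i + 1 : ℕ) : ℝ) / n := by gcongr; simp
    have hpos : (0 : ℝ) < i / n := div_pos (by exact_mod_cast hi.1) hn'
    rw [← hstep]
    exact mul_le_intervalIntegral_of_monotoneOn hle
      (hf.mono fun t ht => ⟨hpos.trans_le ht.1, ht.2.le.trans (hx _ hi.2)⟩)
      (intervalIntegrable_of_monotoneOn_Ioc_zero_one hf h0 hpos.le hle (hx _ hi.2))
  have hfirst : 0 ≤ ∫ t in (0 : ℝ)..(1 / n), f t := by
    rw [intervalIntegral.integral_of_le (by positivity)]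
    exact setIntegral_nonneg measurableSet_Ioc fun t ht =>
      h0 t ⟨ht.1, ht.2.trans (by simpa using hx 1 hn)⟩
  calc 1 / n * ∑ j ∈ Icc 1 n, f (j / n)
      = ∑ i ∈ Ico 1 n, 1 / n * f (i / n) + f 1 / n := by
        rw [← Ico_add_one_right_eq_Icc, sum_Ico_succ_top hn, mul_add, mul_sum, div_self hn'.ne']
        ring
    _ ≤ ∑ i ∈ Ico 1 n, (∫ t in (i / n : ℝ)..((i + 1 : ℕ) / n), f t) + f 1 / n := by
        gcongr with i hi
        exact hpiece i hi
    _ = (∫ t in (1 / n : ℝ)..1, f t) + f 1 / n := by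
        rw [intervalIntegral.sum_integral_adjacent_intervals_Ico (a := fun i : ℕ => (i : ℝ) / n) hn
          fun i hi => intervalIntegrable_of_monotoneOn_Ioc_zero_one hf h0 (by positivity)
            (by gcongr; simp) (hx (i + 1) hi.2)]
        simp [hn'.ne']
    _ ≤ (∫ t in (0 : ℝ)..1, f t) + f 1 / n := by
        rw [← intervalIntegral.integral_add_adjacent_intervals (b := 1 / n)
          (intervalIntegrable_of_monotoneOn_Ioc_zero_one hf h0 le_rfl (by positivity)
            (by simpa using hx 1 hn))
          (intervalIntegrable_of_monotoneOn_Ioc_zero_one hf h0 (by positivity)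
            (by simpa using hx 1 hn) le_rfl)]
        linarith

theorem tendsto_riemannSum_of_monotoneOn :
    Tendsto (fun n : ℕ => 1 / n * ∑ j ∈ Icc 1 n, f (j / n)) atTop
      (nhds (∫ t in (0 : ℝ)..1, f t)) := by
  have hupper : Tendsto (fun n : ℕ => (∫ t in (0 : ℝ)..1, f t) + f 1 / n) atTop
      (nhds (∫ t in (0 : ℝ)..1, f t)) := by
    simpa using tendsto_const_nhds.add (tendsto_const_div_atTop_nhds_zero_nat (f 1))
  refine tendsto_of_tendsto_of_tendsto_of_le_of_le' tendsto_const_nhds hupper ?_ ?_ <;>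
    filter_upwards [eventually_ge_atTop 1] with n hn
  exacts [intervalIntegral_le_riemannSum hf h0 hn, riemannSum_le_intervalIntegral_add hf h0 hn]

end RiemannSum

lemma integrableOn_exp_neg_div_pow {a : ℝ} (ha : 0 < a) (n : ℕ) :
    IntegrableOn (fun v => exp (-v) / v ^ n) (Set.Ioi a) := by
  refine Integrable.mono' ((exp_neg_integrableOn_Ioi a one_pos).div_const (a ^ n))
    (by fun_prop : Measurable fun v : ℝ => exp (-v) / v ^ n).aestronglyMeasurable ?_
  filter_upwards [ae_restrict_mem measurableSet_Ioi] with v hv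
  have hv' : 0 < v := ha.trans hv
  have hav : a ≤ v := hv.out.le
  rw [Real.norm_of_nonneg (by positivity), neg_one_mul]
  gcongr

lemma integrableOn_exp_neg_div {a : ℝ} (ha : 0 < a) :
    IntegrableOn (fun v => exp (-v) / v) (Set.Ioi a) := by
  simpa only [pow_one] using integrableOn_exp_neg_div_pow ha 1

lemma integral_exp_neg_div_add_exp_neg_div_sq {a : ℝ} (ha : 0 < a) :
    ∫ v in Set.Ioi a, (exp (-v) / v + exp (-v) / v ^ 2) = exp (-a) / a := by
  have hderiv (v : ℝ) (hv : v ∈ Set.Ici a) :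
      HasDerivAt (fun v => -exp (-v) / v) (exp (-v) / v + exp (-v) / v ^ 2) v := by
    have hv0 : v ≠ 0 := (ha.trans_le hv).ne'
    refine (((hasDerivAt_id' v).neg.exp.neg).div (hasDerivAt_id' v) hv0).congr_deriv ?_
    simp only [Pi.neg_apply]
    field_simp
    ring
  have hlim : Tendsto (fun v => -exp (-v) / v) atTop (nhds 0) := by
    simpa using (tendsto_exp_neg_atTop_nhds_zero.neg).div_atTop tendsto_id
  rw [integral_Ioi_of_hasDerivAt_of_tendsto' hderiv
    ((integrableOn_exp_neg_div ha).add (integrableOn_exp_neg_div_pow ha 2)) hlim]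
  ring

lemma image_exp_one_sub_Ici_one : (fun v => exp (1 - v)) '' Set.Ici 1 = Set.Ioc 0 1 := by
  ext t
  constructor
  · rintro ⟨v, hv, rfl⟩
    exact ⟨exp_pos _, exp_le_one_iff.2 (by linarith [hv.out])⟩
  · rintro ⟨ht₀, ht₁⟩
    exact ⟨1 - log t, by simp [log_nonpos ht₀.le ht₁], by simp [exp_log ht₀]⟩

/-- The substitution `t = e^{1-v}`. -/
lemma intervalIntegral_one_div_one_sub_log_sq_eq :
    ∫ t in (0 : ℝ)..1, 1 / (1 - log t) ^ 2 = exp 1 * ∫ v in Set.Ioi 1, exp (-v) / v ^ 2 := by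
  rw [intervalIntegral.integral_of_le zero_le_one, ← image_exp_one_sub_Ici_one,
    integral_image_eq_integral_abs_deriv_smul measurableSet_Ici
      (fun v _ => ((hasDerivAt_id' v).const_sub 1).exp.hasDerivWithinAt)
      (exp_injective.comp (sub_right_injective (b := (1 : ℝ)))).injOn,
    integral_Ici_eq_integral_Ioi, ← integral_const_mul]
  refine setIntegral_congr_fun measurableSet_Ioi fun v _ => ?_
  rw [smul_eq_mul, log_exp, sub_sub_cancel, abs_of_neg (by simp [exp_pos]), sub_eq_add_neg,
    exp_add]
  ring

lemma intervalIntegral_one_div_one_sub_log_sq :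
    ∫ t in (0 : ℝ)..1, 1 / (1 - log t) ^ 2 = 1 - exp 1 * Ei 1 := by
  have h := integral_exp_neg_div_add_exp_neg_div_sq one_pos
  rw [integral_add (integrableOn_exp_neg_div one_pos) (integrableOn_exp_neg_div_pow one_pos 2)] at h
  rw [intervalIntegral_one_div_one_sub_log_sq_eq, Ei, eq_sub_of_add_eq' h, div_one, mul_sub,
    ← exp_add, add_neg_cancel, exp_zero]

lemma Htail_self (k : ℕ) : Htail k k = 0 := by
  simp [Htail]

lemma Htail_nonneg (b k : ℕ) : 0 ≤ Htail b k :=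
  sum_nonneg fun _ _ => by positivity

lemma Htail_succ_right {b k : ℕ} (h : b ≤ k) :
    Htail b (k + 1) = Htail b k + 1 / ((k : ℝ) + 1) := by
  rw [Htail, Htail, sum_Icc_succ_top (by omega)]
  push_cast; rfl

lemma Htail_pred_left {b k : ℕ} (hb : 1 ≤ b) (hbk : b ≤ k) :
    Htail (b - 1) k = 1 / (b : ℝ) + Htail b k := by
  rw [Htail, Htail, Nat.sub_add_cancel hb, ← add_sum_Ioc_eq_sum_Icc hbk,
    Finset.Icc_add_one_left_eq_Ioc]

lemma log_sub_log_le_Htail {b k : ℕ} (hbk : b ≤ k) :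
    log (k + 1) - log (b + 1) ≤ Htail b k := by
  induction k, hbk using Nat.le_induction with
  | base => simp [Htail_self]
  | succ k hbk ih =>
    have hk : (0 : ℝ) < k + 1 := by positivity
    have := log_le_sub_one_of_pos (div_pos (by positivity : (0 : ℝ) < k + 1 + 1) hk)
    rw [log_div (by positivity) hk.ne', div_sub_one hk.ne', add_sub_cancel_left] at this
    rw [Htail_succ_right hbk]
    push_cast
    linarith

lemma Htail_le_log_sub_log {b k : ℕ} (hb : 1 ≤ b) (hbk : b ≤ k) :
    Htail b k ≤ log k - log b := by
  induction k, hbk using Nat.le_induction with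
  | base => simp [Htail_self]
  | succ k hbk ih =>
    have hk : (0 : ℝ) < k := by exact_mod_cast hb.trans hbk
    have := log_le_sub_one_of_pos (div_pos hk (by positivity : (0 : ℝ) < k + 1))
    rw [log_div hk.ne' (by positivity), div_sub_one (by positivity)] at this
    rw [Htail_succ_right hbk]
    push_cast
    linarith [show ((k : ℝ) - (k + 1)) / (k + 1) = -(1 / (k + 1)) by ring]

lemma tendsto_Htail_atTop (b : ℕ) : Tendsto (Htail b) atTop atTop := by
  have hlog : Tendsto (fun k : ℕ => log ((k : ℝ) + 1) - log (b + 1)) atTop atTop :=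
    tendsto_atTop_add_const_right _ _ <|
      tendsto_log_atTop.comp (tendsto_atTop_add_const_right _ 1 tendsto_natCast_atTop_atTop)
  exact tendsto_atTop_mono' _ ((eventually_ge_atTop b).mono fun _ => log_sub_log_le_Htail) hlog

lemma tendsto_inv_one_add_Htail (b : ℕ) :
    Tendsto (fun k => (1 + Htail b k)⁻¹) atTop (nhds 0) :=
  (tendsto_atTop_add_const_left _ 1 (tendsto_Htail_atTop b)).inv_tendsto_atTop

lemma one_div_one_sub_log_sq_le_one_div_one_add_Htail_sq {b k : ℕ} (hb : 1 ≤ b) (hbk : b ≤ k) :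
    1 / (1 - log ((b : ℝ) / k)) ^ 2 ≤ 1 / (1 + Htail b k) ^ 2 := by
  have hb' : (0 : ℝ) < b := by exact_mod_cast hb
  have hk' : (0 : ℝ) < k := by exact_mod_cast hb.trans hbk
  rw [log_div hb'.ne' hk'.ne']
  exact one_div_sq_le_one_div_sq (by linarith [Htail_nonneg b k])
    (by linarith [Htail_le_log_sub_log hb hbk])

lemma one_div_one_add_Htail_sq_le_one_div_one_sub_log_sq {b k : ℕ} (hbk : b ≤ k) :
    1 / (1 + Htail b k) ^ 2 ≤ 1 / (1 - log (((b + 1 : ℕ) : ℝ) / (k + 1 : ℕ))) ^ 2 := by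
  have hmem : ((b + 1 : ℕ) : ℝ) / (k + 1 : ℕ) ∈ Set.Ioc (0 : ℝ) 1 :=
    ⟨by positivity, div_le_one_of_le₀ (by exact_mod_cast Nat.succ_le_succ hbk) (by positivity)⟩
  have := one_le_one_sub_log hmem
  rw [log_div (by positivity) (by positivity)] at this ⊢
  have hlog := log_sub_log_le_Htail hbk
  push_cast at this ⊢
  exact one_div_sq_le_one_div_sq (by linarith) (by linarith)

lemma riemannSum_le_sum_Icc_div_one_add_Htail_sq (k : ℕ) :
    1 / (k : ℝ) * ∑ j ∈ Icc 1 k, 1 / (1 - log ((j : ℝ) / k)) ^ 2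
      ≤ ∑ b ∈ Icc 1 k, 1 / (k : ℝ) / (1 + Htail b k) ^ 2 := by
  rw [mul_sum]
  refine sum_le_sum fun b hb => ?_
  rw [mem_Icc] at hb
  rw [div_eq_mul_one_div (1 / (k : ℝ))]
  exact mul_le_mul_of_nonneg_left
    (one_div_one_sub_log_sq_le_one_div_one_add_Htail_sq hb.1 hb.2) (by positivity)

lemma sum_Icc_div_one_add_Htail_sq_le_riemannSum {k : ℕ} (hk : 1 ≤ k) :
    ∑ b ∈ Icc 1 k, 1 / (k : ℝ) / (1 + Htail b k) ^ 2
      ≤ (1 + 1 / (k : ℝ)) * (1 / ((k + 1 : ℕ) : ℝ) *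
          ∑ j ∈ Icc 1 (k + 1), 1 / (1 - log ((j : ℝ) / (k + 1 : ℕ))) ^ 2) := by
  set F : ℝ → ℝ := fun t => 1 / (1 - log t) ^ 2
  have hk' : (0 : ℝ) < k := by exact_mod_cast hk
  have hshift : ∑ b ∈ Icc 1 k, F ((b + 1 : ℕ) / (k + 1 : ℕ))
      = ∑ j ∈ Icc 2 (k + 1), F (j / (k + 1 : ℕ)) := by
    rw [show Icc 2 (k + 1) = (Icc 1 k).map (addRightEmbedding 1) from
      (map_add_right_Icc 1 k 1).symm, sum_map]
    rfl
  calc ∑ b ∈ Icc 1 k, 1 / (k : ℝ) / (1 + Htail b k) ^ 2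
      ≤ 1 / (k : ℝ) * ∑ b ∈ Icc 1 k, F ((b + 1 : ℕ) / (k + 1 : ℕ)) := by
        rw [mul_sum]
        refine sum_le_sum fun b hb => ?_
        rw [div_eq_mul_one_div (1 / (k : ℝ))]
        exact mul_le_mul_of_nonneg_left
          (one_div_one_add_Htail_sq_le_one_div_one_sub_log_sq (mem_Icc.1 hb).2) (by positivity)
    _ ≤ 1 / (k : ℝ) * ∑ j ∈ Icc 1 (k + 1), F (j / (k + 1 : ℕ)) := by
        rw [hshift]
        exact mul_le_mul_of_nonneg_left (sum_le_sum_of_subset_of_nonneg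
          (Icc_subset_Icc (by norm_num) le_rfl) fun _ _ _ => by positivity) (by positivity)
    _ = (1 + 1 / (k : ℝ)) * (1 / ((k + 1 : ℕ) : ℝ) * ∑ j ∈ Icc 1 (k + 1), F (j / (k + 1 : ℕ))) := by
        push_cast
        field_simp

/-- Since `H(b,k) ≈ log (k/b)`, this is a Riemann sum of `t ↦ 1/(1 - log t)²` on `(0, 1]`. -/
lemma tendsto_sum_Icc_div_one_add_Htail_sq :
    Tendsto (fun k : ℕ => ∑ b ∈ Icc 1 k, 1 / (k : ℝ) / (1 + Htail b k) ^ 2) atTop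
      (nhds (∫ t in (0 : ℝ)..1, 1 / (1 - log t) ^ 2)) := by
  have hρ := tendsto_riemannSum_of_monotoneOn monotoneOn_one_div_one_sub_log_sq
    fun t _ => by positivity
  have hupper := ((tendsto_const_nhds (x := (1 : ℝ))).add
    tendsto_one_div_atTop_nhds_zero_nat).mul ((tendsto_add_atTop_iff_nat 1).2 hρ)
  rw [add_zero, one_mul] at hupper
  refine tendsto_of_tendsto_of_tendsto_of_le_of_le' hρ hupper
    (Eventually.of_forall riemannSum_le_sum_Icc_div_one_add_Htail_sq) ?_
  filter_upwards [eventually_ge_atTop 1] with k hk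
  exact sum_Icc_div_one_add_Htail_sq_le_riemannSum hk

/-- Tannery's theorem, dominated by the summable `1/b²`. -/
lemma tendsto_sum_Icc_sq_div_sq_one_add_Htail :
    Tendsto (fun k : ℕ => ∑ b ∈ Icc 1 k, (1 / (b : ℝ)) ^ 2 / (1 + Htail b k) ^ 2) atTop
      (nhds 0) := by
  set a : ℕ → ℕ → ℝ := fun k b => (1 / (b : ℝ)) ^ 2 / (1 + Htail b k) ^ 2
  have hlim (b : ℕ) :
      Tendsto (fun k => (↑(Icc 1 k) : Set ℕ).indicator (a k) b) atTop (nhds 0) := by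
    have h : Tendsto (fun k => a k b) atTop (nhds 0) :=
      tendsto_const_nhds.div_atTop <| (tendsto_pow_atTop two_ne_zero).comp <|
        tendsto_atTop_add_const_left _ 1 (tendsto_Htail_atTop b)
    refine h.congr' ?_
    filter_upwards [eventually_ge_atTop b] with k hk
    rcases Nat.eq_zero_or_pos b with rfl | hb
    · simp [a]
    · rw [Set.indicator_of_mem (by simp; omega)]
  have hbound (k b : ℕ) : ‖(↑(Icc 1 k) : Set ℕ).indicator (a k) b‖ ≤ 1 / (b : ℝ) ^ 2 := by
    rw [norm_indicator_eq_indicator_norm]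
    refine Set.indicator_apply_le' (fun _ => ?_) (fun _ => by positivity)
    rw [Real.norm_of_nonneg (by positivity), ← one_div_pow]
    exact div_le_self (by positivity) (one_le_pow₀ (by linarith [Htail_nonneg b k]))
  have := tendsto_tsum_of_dominated_convergence (summable_one_div_nat_pow.mpr one_lt_two) hlim
    (Eventually.of_forall hbound)
  rw [tsum_zero] at this
  exact this.congr fun k => (sum_eq_tsum_indicator (a k) _).symm

lemma sum_Icc_two_mul_inv_sub_inv (k : ℕ) :
    ∑ b ∈ Icc 1 k, 2 * ((1 + Htail b k)⁻¹ - (1 + Htail b k + 1 / (b : ℝ))⁻¹)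
      = 2 * (1 - (1 + Htail 0 k)⁻¹) := by
  rw [← mul_sum]
  congr 1
  calc ∑ b ∈ Icc 1 k, ((1 + Htail b k)⁻¹ - (1 + Htail b k + 1 / (b : ℝ))⁻¹)
      = ∑ b ∈ Icc 1 k, ((1 + Htail b k)⁻¹ - (1 + Htail (b - 1) k)⁻¹) := by
        refine sum_congr rfl fun b hb => ?_
        rw [mem_Icc] at hb
        rw [Htail_pred_left hb.1 hb.2, add_comm (1 / (b : ℝ)), add_assoc]
    _ = 1 - (1 + Htail 0 k)⁻¹ := by
        rw [sum_Icc_sub_pred (fun b => (1 + Htail b k)⁻¹), Htail_self, add_zero, inv_one]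

lemma abs_sum_sub_telescope_le (k : ℕ) :
    |∑ b ∈ Icc 1 k,
        ((1 : ℝ) / (b : ℝ) + ∑ j ∈ Icc (b + 1) k, (1 : ℝ) / (j : ℝ) ^ 2) / (1 + Htail b k) ^ 2
      - (2 * (1 - (1 + Htail 0 k)⁻¹) - ∑ b ∈ Icc 1 k, 1 / (k : ℝ) / (1 + Htail b k) ^ 2)|
      ≤ 2 * ∑ b ∈ Icc 1 k, (1 / (b : ℝ)) ^ 2 / (1 + Htail b k) ^ 2 := by
  rw [← sum_Icc_two_mul_inv_sub_inv, ← sum_sub_distrib, ← sum_sub_distrib, mul_sum]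
  refine (abs_sum_le_sum_abs _ _).trans (sum_le_sum fun b hb => ?_)
  rw [mem_Icc] at hb
  have hb' : (1 : ℝ) ≤ b := by exact_mod_cast hb.1
  have hkb : (b : ℝ) ≤ k := by exact_mod_cast hb.2
  refine abs_sub_two_mul_inv_sub_inv_le (by positivity) (by linarith [Htail_nonneg b k]) ?_
    (sum_Icc_one_div_sq_le hb.1 hb.2)
  refine le_trans ?_ (sub_le_sum_Icc_one_div_sq hb.2)
  have h₁ : 1 / (b : ℝ) - 1 / (b + 1) ≤ (1 / (b : ℝ)) ^ 2 := by
    rw [div_sub_div _ _ (by positivity) (by positivity), div_pow, div_le_div_iff₀ (by positivity)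
      (by positivity)]
    nlinarith
  have h₂ : 1 / ((k : ℝ) + 1) ≤ 1 / k := one_div_le_one_div_of_le (by linarith) (by linarith)
  linarith

/-- `lim_{k→∞} ∑_{b=1}^{k} (1/b + ∑_{j=b+1}^{k} 1/j²)/(1 + H(b,k))² = 1 + e·Ei(1)`. -/
theorem limit_variance_coefficient :
    Filter.Tendsto
      (fun k : ℕ => ∑ b ∈ Finset.Icc 1 k,
        ((1 : ℝ) / (b : ℝ) + ∑ j ∈ Finset.Icc (b + 1) k, (1 : ℝ) / (j : ℝ) ^ 2)
          / (1 + Htail b k) ^ 2)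
      Filter.atTop (nhds (1 + Real.exp 1 * Ei 1)) := by
  have hmain : Tendsto (fun k : ℕ => 2 * (1 - (1 + Htail 0 k)⁻¹)
      - ∑ b ∈ Icc 1 k, 1 / (k : ℝ) / (1 + Htail b k) ^ 2) atTop (nhds (1 + exp 1 * Ei 1)) := by
    convert ((tendsto_inv_one_add_Htail 0).const_sub 1 |>.const_mul 2).sub
      tendsto_sum_Icc_div_one_add_Htail_sq using 2
    rw [intervalIntegral_one_div_one_sub_log_sq]
    ring
  have herror : Tendsto (fun k : ℕ => ∑ b ∈ Icc 1 k,
      ((1 : ℝ) / (b : ℝ) + ∑ j ∈ Icc (b + 1) k, (1 : ℝ) / (j : ℝ) ^ 2) / (1 + Htail b k) ^ 2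
        - (2 * (1 - (1 + Htail 0 k)⁻¹) - ∑ b ∈ Icc 1 k, 1 / (k : ℝ) / (1 + Htail b k) ^ 2))
      atTop (nhds 0) := by
    refine squeeze_zero_norm abs_sum_sub_telescope_le ?_
    simpa using tendsto_sum_Icc_sq_div_sq_one_add_Htail.const_mul 2
  simpa using herror.add hmain
end

section
/- Define Ei(x) = ∫_{x}^{∞} e^{−v}/v dv for x > 0, and for p < 0 define f(p) = [1 − e^{1−2p}(1−2p)Ei(1−2p) − e^{2−2p}Ei(1−p)²]/(p²(1−p)²) + 2·[e^{2−p}Ei(1−p)Ei(1) − 1 + e^{1−p}(1−p)Ei(1−p)]/(p²(1−p)) + [1 − e·Ei(1) − e²·Ei(1)²]/p². Then f(p) > 0 for every real number p < 0. -/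
open Real

open Set MeasureTheory

-- Ei a = e^{-a} ∫_{Ioi 0} e^{-x}/(a+x) dx
lemma Ei_repr {a : ℝ} (ha : 0 < a) :
    ∫ x in Ioi (0:ℝ), Real.exp (-x) / (a + x) = Real.exp a * Ei a := by
  have hme : MeasurableEmbedding (fun x : ℝ => x + a) :=
    (MeasurableEquiv.addRight a).measurableEmbedding
  have hmap : Measure.map (fun x : ℝ => x + a) volume = volume :=
    MeasureTheory.map_add_right_eq_self volume a
  have h1 : Ei a = ∫ x in (fun x : ℝ => x + a) ⁻¹' (Ioi a), Real.exp (-(x + a)) / (x + a) := by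
    rw [Ei, ← hme.setIntegral_map (fun v => Real.exp (-v) / v) (Ioi a), hmap]
  have hpre : (fun x : ℝ => x + a) ⁻¹' (Ioi a) = Ioi 0 := by
    ext x; simp [mem_Ioi]
  rw [hpre] at h1
  rw [h1, ← integral_const_mul]
  congr 1 with x
  rw [add_comm a x, show -(x + a) = -x - a from by ring, Real.exp_sub, div_div,
    ← mul_div_assoc, mul_div_mul_left _ _ (Real.exp_ne_zero a)]

lemma integrableOn_aux {a : ℝ} (ha : 0 < a) (k : ℕ) :
    IntegrableOn (fun t : ℝ => Real.exp (-(a*t)) / (1+t)^k) (Ioi 0) := by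
  have hmeas : AEStronglyMeasurable (fun t : ℝ => Real.exp (-(a*t)) / (1+t)^k)
      (volume.restrict (Ioi 0)) := by
    apply ContinuousOn.aestronglyMeasurable _ measurableSet_Ioi
    apply ContinuousOn.div
    · exact (Real.continuous_exp.comp (continuous_const.mul continuous_id).neg).continuousOn
    · fun_prop
    · intro t ht
      have h1 : (0:ℝ) < 1 + t := by have := mem_Ioi.mp ht; linarith
      positivity
  refine MeasureTheory.Integrable.mono (exp_neg_integrableOn_Ioi 0 ha) hmeas ?_
  rw [ae_restrict_iff' measurableSet_Ioi]
  filter_upwards with t ht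
  have h1 : (0:ℝ) < 1 + t := by simp at ht; linarith
  have h2 : (1:ℝ) ≤ (1+t)^k := one_le_pow₀ (by have := mem_Ioi.mp ht; linarith)
  rw [Real.norm_eq_abs, Real.norm_eq_abs, abs_of_pos (by positivity), abs_of_pos (Real.exp_pos _)]
  rw [show -a * t = -(a*t) by ring]
  calc Real.exp (-(a*t)) / (1+t)^k ≤ Real.exp (-(a*t)) / 1 := by
        apply div_le_div_of_nonneg_left (Real.exp_pos _).le one_pos h2
    _ = Real.exp (-(a*t)) := by rw [div_one]

lemma I1 {a : ℝ} (ha : 0 < a) :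
    ∫ t in Ioi (0:ℝ), Real.exp (-(a*t)) / (1+t) = Real.exp a * Ei a := by
  have key := integral_comp_mul_left_Ioi (fun x => Real.exp (-x) / (a + x) * a) 0 ha
  simp only [mul_zero] at key
  have h1 : ∀ t : ℝ, Real.exp (-(a*t)) / (a + a*t) * a = Real.exp (-(a*t)) / (1+t) := by
    intro t
    rcases eq_or_ne (1+t) 0 with h | h
    · simp [show a + a*t = a * (1+t) by ring, h]
    · rw [show a + a*t = a * (1+t) by ring]
      field_simp
  simp only [h1] at key
  rw [key, integral_mul_const, Ei_repr ha, smul_eq_mul]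
  field_simp

lemma I2 {a : ℝ} (ha : 0 < a) :
    ∫ t in Ioi (0:ℝ), Real.exp (-(a*t)) / (1+t)^2 = 1 - a * (Real.exp a * Ei a) := by
  set F : ℝ → ℝ := fun t => -Real.exp (-(a*t)) / (1+t) with hF
  have hderiv : ∀ t ∈ Ici (0:ℝ), HasDerivAt F
      (a * (Real.exp (-(a*t)) / (1+t)) + Real.exp (-(a*t)) / (1+t)^2) t := by
    intro t ht
    have h1 : (0:ℝ) < 1 + t := by simp at ht; linarith
    have hd1 : HasDerivAt (fun t : ℝ => -Real.exp (-(a*t))) (a * Real.exp (-(a*t))) t := by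
      have := (Real.hasDerivAt_exp (-(a*t))).comp t (((hasDerivAt_id t).const_mul a).neg)
      exact this.neg.congr_deriv (by ring)
    have := hd1.div (HasDerivAt.const_add 1 (hasDerivAt_id t)) h1.ne'
    refine this.congr_deriv ?_
    simp only [id]
    field_simp
    ring
  have hint : IntegrableOn (fun t => a * (Real.exp (-(a*t)) / (1+t))
      + Real.exp (-(a*t)) / (1+t)^2) (Ioi 0) := by
    have h1 := (integrableOn_aux ha 1).const_mul a
    simp only [pow_one] at h1
    exact h1.add (integrableOn_aux ha 2)
  have htend : Filter.Tendsto F Filter.atTop (nhds 0) := by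
    have h1 : Filter.Tendsto (fun t : ℝ => Real.exp (-(a*t))) Filter.atTop (nhds 0) := by
      rw [show (fun t : ℝ => Real.exp (-(a*t))) = fun t : ℝ => Real.exp (-a * t) by
        funext t; ring_nf]
      exact Real.tendsto_exp_comp_nhds_zero.mpr (Filter.Tendsto.const_mul_atTop_of_neg
        (neg_neg_iff_pos.mpr ha) Filter.tendsto_id)
    have h2 : Filter.Tendsto (fun t : ℝ => (1+t)⁻¹) Filter.atTop (nhds 0) :=
      Filter.Tendsto.inv_tendsto_atTop (Filter.tendsto_atTop_add_const_left _ 1 Filter.tendsto_id)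
    have := (h1.neg.mul h2)
    simp only [neg_zero, zero_mul] at this
    refine this.congr fun t => ?_
    rw [hF]; ring
  have key := integral_Ioi_of_hasDerivAt_of_tendsto' hderiv hint htend
  have hF0 : F 0 = -1 := by simp [hF]
  rw [hF0, sub_neg_eq_add, zero_add] at key
  have hsplit : ∫ t in Ioi (0:ℝ), (a * (Real.exp (-(a*t)) / (1+t))
      + Real.exp (-(a*t)) / (1+t)^2)
      = a * (∫ t in Ioi (0:ℝ), Real.exp (-(a*t)) / (1+t))
        + ∫ t in Ioi (0:ℝ), Real.exp (-(a*t)) / (1+t)^2 := by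
    have ha1 : IntegrableOn (fun t : ℝ => a * (Real.exp (-(a*t)) / (1+t))) (Ioi 0) := by
      simpa [pow_one, IntegrableOn] using (integrableOn_aux ha 1).const_mul a
    rw [integral_add ha1 (integrableOn_aux ha 2), integral_const_mul]
  rw [hsplit, I1 ha] at key
  linarith

lemma integrableOn_aux1 {a : ℝ} (ha : 0 < a) :
    IntegrableOn (fun t : ℝ => Real.exp (-(a*t)) / (1+t)) (Ioi 0) := by
  simpa using integrableOn_aux ha 1

lemma intA (p : ℝ) (hp : p < 0) :
    ∫ t in Ioi (0:ℝ), Real.exp (-t) * ((Real.exp (p*t)/(1-p) - 1)/(p*(1+t)))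
      = 1/(p*(1-p)) * (Real.exp (1-p) * Ei (1-p)) - 1/p * (Real.exp 1 * Ei 1) := by
  have hq : (0:ℝ) < 1-p := by linarith
  have hpt : ∀ t : ℝ, Real.exp (-t) * ((Real.exp (p*t)/(1-p) - 1)/(p*(1+t)))
      = 1/(p*(1-p)) * (Real.exp (-((1-p)*t))/(1+t)) - 1/p * (Real.exp (-(1*t))/(1+t)) := by
    intro t
    have he : Real.exp (-((1-p)*t)) = Real.exp (p*t) * Real.exp (-t) := by
      rw [← Real.exp_add]; ring_nf
    have he1 : Real.exp (-(1*t)) = Real.exp (-t) := by ring_nf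
    rcases eq_or_ne (1+t) 0 with h | h
    · simp [h, he, he1]
    · rw [he, he1]; field_simp [hp.ne, hq.ne', h]
  simp only [hpt]
  rw [integral_sub ((integrableOn_aux1 hq).const_mul _) ((integrableOn_aux1 one_pos).const_mul _),
    integral_const_mul, integral_const_mul, I1 hq, I1 one_pos]

lemma aux_alg (E F q p N : ℝ) (hq : q ≠ 0) (hp : p ≠ 0) (hN : N ≠ 0) :
    F * ((E/q - 1)/(p*N))^2
      = 1/(p^2*q^2) * (E*E*F/N^2) - 2/(p^2*q) * (E*F/N^2) + 1/p^2 * (F/N^2) := by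
  field_simp
  ring

set_option maxHeartbeats 1000000 in
lemma intB (p : ℝ) (hp : p < 0) :
    ∫ t in Ioi (0:ℝ), Real.exp (-t) * ((Real.exp (p*t)/(1-p) - 1)/(p*(1+t)))^2
      = 1/(p^2*(1-p)^2) * (1 - (1-2*p) * (Real.exp (1-2*p) * Ei (1-2*p)))
        - 2/(p^2*(1-p)) * (1 - (1-p) * (Real.exp (1-p) * Ei (1-p)))
        + 1/p^2 * (1 - 1 * (Real.exp 1 * Ei 1)) := by
  have hq : (0:ℝ) < 1-p := by linarith
  have hq2 : (0:ℝ) < 1-2*p := by linarith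
  have hpt : ∀ t : ℝ, Real.exp (-t) * ((Real.exp (p*t)/(1-p) - 1)/(p*(1+t)))^2
      = 1/(p^2*(1-p)^2) * (Real.exp (-((1-2*p)*t))/(1+t)^2)
        - 2/(p^2*(1-p)) * (Real.exp (-((1-p)*t))/(1+t)^2)
        + 1/p^2 * (Real.exp (-(1*t))/(1+t)^2) := by
    intro t
    have he2 : Real.exp (-((1-2*p)*t)) = Real.exp (p*t) * Real.exp (p*t) * Real.exp (-t) := by
      rw [← Real.exp_add, ← Real.exp_add]; ring_nf
    have he : Real.exp (-((1-p)*t)) = Real.exp (p*t) * Real.exp (-t) := by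
      rw [← Real.exp_add]; ring_nf
    have he1 : Real.exp (-(1*t)) = Real.exp (-t) := by ring_nf
    rcases eq_or_ne (1+t) 0 with h | h
    · simp [h, he, he1, he2]
    · rw [he, he1, he2]
      exact aux_alg _ _ _ _ _ hq.ne' hp.ne h
  simp only [hpt]
  have i1 : IntegrableOn (fun t : ℝ => 1/(p^2*(1-p)^2) * (Real.exp (-((1-2*p)*t))/(1+t)^2)
      - 2/(p^2*(1-p)) * (Real.exp (-((1-p)*t))/(1+t)^2)) (Ioi 0) :=
    ((integrableOn_aux hq2 2).const_mul _).sub ((integrableOn_aux hq 2).const_mul _)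
  rw [integral_add i1 ((integrableOn_aux one_pos 2).const_mul _),
    integral_sub ((integrableOn_aux hq2 2).const_mul _) ((integrableOn_aux hq 2).const_mul _),
    integral_const_mul, integral_const_mul, integral_const_mul, I2 hq2, I2 hq, I2 one_pos]

lemma intA_integrable (p : ℝ) (hp : p < 0) :
    IntegrableOn (fun t : ℝ => Real.exp (-t) * ((Real.exp (p*t)/(1-p) - 1)/(p*(1+t))))
      (Ioi 0) := by
  have hq : (0:ℝ) < 1-p := by linarith
  have hpt : ∀ t : ℝ, Real.exp (-t) * ((Real.exp (p*t)/(1-p) - 1)/(p*(1+t)))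
      = 1/(p*(1-p)) * (Real.exp (-((1-p)*t))/(1+t)) - 1/p * (Real.exp (-(1*t))/(1+t)) := by
    intro t
    have he : Real.exp (-((1-p)*t)) = Real.exp (p*t) * Real.exp (-t) := by
      rw [← Real.exp_add]; ring_nf
    have he1 : Real.exp (-(1*t)) = Real.exp (-t) := by ring_nf
    rcases eq_or_ne (1+t) 0 with h | h
    · simp [h, he, he1]
    · rw [he, he1]; field_simp [hp.ne, hq.ne', h]
  simp only [hpt]
  exact ((integrableOn_aux1 hq).const_mul _).sub ((integrableOn_aux1 one_pos).const_mul _)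

lemma intB_integrable (p : ℝ) (hp : p < 0) :
    IntegrableOn (fun t : ℝ => Real.exp (-t) * ((Real.exp (p*t)/(1-p) - 1)/(p*(1+t)))^2)
      (Ioi 0) := by
  have hq : (0:ℝ) < 1-p := by linarith
  have hq2 : (0:ℝ) < 1-2*p := by linarith
  have hpt : ∀ t : ℝ, Real.exp (-t) * ((Real.exp (p*t)/(1-p) - 1)/(p*(1+t)))^2
      = 1/(p^2*(1-p)^2) * (Real.exp (-((1-2*p)*t))/(1+t)^2)
        - 2/(p^2*(1-p)) * (Real.exp (-((1-p)*t))/(1+t)^2)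
        + 1/p^2 * (Real.exp (-(1*t))/(1+t)^2) := by
    intro t
    have he2 : Real.exp (-((1-2*p)*t)) = Real.exp (p*t) * Real.exp (p*t) * Real.exp (-t) := by
      rw [← Real.exp_add, ← Real.exp_add]; ring_nf
    have he : Real.exp (-((1-p)*t)) = Real.exp (p*t) * Real.exp (-t) := by
      rw [← Real.exp_add]; ring_nf
    have he1 : Real.exp (-(1*t)) = Real.exp (-t) := by ring_nf
    rcases eq_or_ne (1+t) 0 with h | h
    · simp [h, he, he1, he2]
    · rw [he, he1, he2]
      exact aux_alg _ _ _ _ _ hq.ne' hp.ne h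
  simp only [hpt]
  exact (((integrableOn_aux hq2 2).const_mul _).sub ((integrableOn_aux hq 2).const_mul _)).add
    ((integrableOn_aux one_pos 2).const_mul _)

lemma aux_alg2 (p X Y Z : ℝ) (hp : p ≠ 0) (hq : (1:ℝ) - p ≠ 0) :
    (1 - (1-2*p) * Y - X^2) / (p^2*(1-p)^2)
      + 2 * (X*Z - 1 + (1-p)*X) / (p^2*(1-p))
      + (1 - Z - Z^2) / p^2
    = (1/(p^2*(1-p)^2) * (1 - (1-2*p)*Y) - 2/(p^2*(1-p)) * (1 - (1-p)*X) + 1/p^2 * (1 - 1*Z))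
      - (1/(p*(1-p)) * X - 1/p * Z)^2 := by
  field_simp
  ring

/-- The coefficient `f(p)` of the squared second-order term in the asymptotic expansion of
the mean empirical variance of the lower-trimmed Hill statistics. -/
noncomputable def fCoeff (p : ℝ) : ℝ :=
  (1 - Real.exp (1 - 2 * p) * (1 - 2 * p) * Ei (1 - 2 * p)
      - Real.exp (2 - 2 * p) * Ei (1 - p) ^ 2) / (p ^ 2 * (1 - p) ^ 2)
    + 2 * (Real.exp (2 - p) * Ei (1 - p) * Ei 1 - 1
      + Real.exp (1 - p) * (1 - p) * Ei (1 - p)) / (p ^ 2 * (1 - p))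
    + (1 - Real.exp 1 * Ei 1 - Real.exp 2 * Ei 1 ^ 2) / p ^ 2

set_option maxHeartbeats 1600000 in
/-- `f(p) > 0` for every `p < 0`. -/
theorem fCoeff_pos (p : ℝ) (hp : p < 0) : 0 < fCoeff p := by
  have hq : (0:ℝ) < 1-p := by linarith
  set g : ℝ → ℝ := fun t => (Real.exp (p*t)/(1-p) - 1)/(p*(1+t)) with hg
  set A : ℝ := 1/(p*(1-p)) * (Real.exp (1-p) * Ei (1-p)) - 1/p * (Real.exp 1 * Ei 1) with hA'
  set B : ℝ := 1/(p^2*(1-p)^2) * (1 - (1-2*p) * (Real.exp (1-2*p) * Ei (1-2*p)))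
        - 2/(p^2*(1-p)) * (1 - (1-p) * (Real.exp (1-p) * Ei (1-p)))
        + 1/p^2 * (1 - 1 * (Real.exp 1 * Ei 1)) with hB'
  have hA : (∫ t in Ioi (0:ℝ), Real.exp (-t) * g t) = A := by
    simp only [hg, hA']; exact intA p hp
  have hB : (∫ t in Ioi (0:ℝ), Real.exp (-t) * (g t)^2) = B := by
    simp only [hg, hB']; exact intB p hp
  have hint1 : IntegrableOn (fun t : ℝ => Real.exp (-t) * g t) (Ioi 0) := by
    simp only [hg]; exact intA_integrable p hp
  have hint2 : IntegrableOn (fun t : ℝ => Real.exp (-t) * (g t)^2) (Ioi 0) := by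
    simp only [hg]; exact intB_integrable p hp
  have hexp : IntegrableOn (fun t : ℝ => Real.exp (-t)) (Ioi 0) := by
    simpa using exp_neg_integrableOn_Ioi 0 one_pos
  -- the variance integrand
  have hfeq : (fun t : ℝ => Real.exp (-t) * (g t - A)^2)
      = fun t : ℝ => (Real.exp (-t) * (g t)^2 - 2*A*(Real.exp (-t) * g t))
          + A^2 * Real.exp (-t) := funext fun t => by ring
  have hfint : IntegrableOn (fun t : ℝ => Real.exp (-t) * (g t - A)^2) (Ioi 0) := by
    rw [hfeq]
    exact (hint2.sub (hint1.const_mul _)).add (hexp.const_mul _)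
  have i1 : IntegrableOn (fun t : ℝ => Real.exp (-t) * (g t)^2 - 2*A*(Real.exp (-t) * g t))
      (Ioi 0) := hint2.sub (hint1.const_mul _)
  have i2 : IntegrableOn (fun t : ℝ => A^2 * Real.exp (-t)) (Ioi 0) := hexp.const_mul _
  have hV : (∫ t in Ioi (0:ℝ), Real.exp (-t) * (g t - A)^2) = B - A^2 := by
    rw [hfeq, integral_add i1 i2, integral_sub hint2 (hint1.const_mul _),
      integral_const_mul, integral_const_mul, hA, hB, integral_exp_neg_Ioi_zero]
    ring
  -- non-constancy of g
  have hx0 : 0 < Real.exp p := Real.exp_pos p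
  have hx1 : Real.exp p < 1 := by
    have := Real.exp_lt_exp.mpr hp
    simpa using this
  have key : g 1 ≠ A ∨ g 2 ≠ A ∨ g 3 ≠ A := by
    by_contra hcon
    push_neg at hcon
    obtain ⟨h1, h2, h3⟩ := hcon
    simp only [hg] at h1 h2 h3
    rw [show p*(1:ℝ) = p by ring] at h1
    rw [show p*(2:ℝ) = p+p by ring, Real.exp_add] at h2
    rw [show p*(3:ℝ) = p+p+p by ring, Real.exp_add, Real.exp_add] at h3
    set x := Real.exp p with hx
    have h12 : (x/(1-p) - 1)/(p*(1+1)) = (x*x/(1-p) - 1)/(p*(1+2)) := h1.trans h2.symm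
    have h13 : (x/(1-p) - 1)/(p*(1+1)) = (x*x*x/(1-p) - 1)/(p*(1+3)) := h1.trans h3.symm
    field_simp [hp.ne, hq.ne'] at h12 h13
    have e12 : 3*(x - (1-p)) = 2*(x*x - (1-p)) :=
      by linear_combination h12
    have e13 : 2*(x - (1-p)) = x*x*x - (1-p) :=
      by linear_combination h13/2
    have hsq : (0:ℝ) < (x-1)^2 := by nlinarith [mul_pos (sub_pos.mpr hx1) (sub_pos.mpr hx1)]
    nlinarith [mul_pos hx0 hsq]
  obtain ⟨t0, ht0pos, hgt0⟩ : ∃ t0 : ℝ, 0 < t0 ∧ g t0 ≠ A := by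
    rcases key with h | h | h
    exacts [⟨1, one_pos, h⟩, ⟨2, two_pos, h⟩, ⟨3, by norm_num, h⟩]
  have hc : ContinuousAt g t0 := by
    rw [hg]
    apply ContinuousAt.div
    · fun_prop
    · fun_prop
    · exact mul_ne_zero hp.ne (by linarith : (0:ℝ) < 1+t0).ne'
  have hev : {t : ℝ | g t ≠ A ∧ t ∈ Ioi 0} ∈ nhds t0 :=
    (hc.eventually_ne hgt0).and (isOpen_Ioi.eventually_mem (mem_Ioi.mpr ht0pos))
  obtain ⟨U, hUsub, hUopen, ht0U⟩ := mem_nhds_iff.mp hev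
  have hμ : 0 < volume (Function.support (fun t : ℝ => Real.exp (-t) * (g t - A)^2) ∩ Ioi 0) := by
    refine lt_of_lt_of_le (hUopen.measure_pos volume ⟨t0, ht0U⟩) (measure_mono ?_)
    intro t ht
    have hm := hUsub ht
    refine ⟨?_, hm.2⟩
    simp only [Function.mem_support]
    intro h0
    apply hm.1
    rcases mul_eq_zero.mp h0 with h | h
    · exact absurd h (Real.exp_ne_zero _)
    · have := (pow_eq_zero_iff (two_ne_zero)).mp h
      linarith [sub_eq_zero.mp this]
  have hVpos : 0 < ∫ t in Ioi (0:ℝ), Real.exp (-t) * (g t - A)^2 := by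
    refine (setIntegral_pos_iff_support_of_nonneg_ae ?_ hfint).mpr hμ
    filter_upwards with t
    positivity
  have hfinal : fCoeff p = B - A^2 := by
    have e1 : Real.exp (2-2*p) = Real.exp (1-p) * Real.exp (1-p) := by
      rw [← Real.exp_add]; ring_nf
    have e2 : Real.exp (2-p) = Real.exp (1-p) * Real.exp 1 := by
      rw [← Real.exp_add]; ring_nf
    have e3 : Real.exp 2 = Real.exp 1 * Real.exp 1 := by
      rw [← Real.exp_add]; ring_nf
    have h := aux_alg2 p (Real.exp (1-p) * Ei (1-p)) (Real.exp (1-2*p) * Ei (1-2*p))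
      (Real.exp 1 * Ei 1) hp.ne hq.ne'
    calc fCoeff p
        = (1 - (1-2*p) * (Real.exp (1-2*p) * Ei (1-2*p)) - (Real.exp (1-p) * Ei (1-p))^2)
              / (p^2*(1-p)^2)
          + 2 * ((Real.exp (1-p) * Ei (1-p))*(Real.exp 1 * Ei 1) - 1
              + (1-p)*(Real.exp (1-p) * Ei (1-p))) / (p^2*(1-p))
          + (1 - (Real.exp 1 * Ei 1) - (Real.exp 1 * Ei 1)^2) / p^2 := by
          unfold fCoeff; rw [e1, e2, e3]; ring
      _ = B - A^2 := by rw [h, hA', hB']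
  rw [hfinal, ← hV]
  exact hVpos
end
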